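/- Let A be an n×n irreducible Stieltjes matrix with smallest eigenvalue μ. Suppose each f_i maps [0,∞) into [0,∞), is continuously differentiable on [0,∞), satisfies f_i(t)/t → 0 as t → 0⁺ and f_i(t)/t → ∞ as t → ∞, and satisfies f_i(s)/s < f_i(t)/t whenever 0 < s < t. Then: (a) for every M > 0 there exists Λ > μ such that whenever λ > Λ and x is a vector with all components positive satisfying A x + F(x) = λ x, every component x_i > M; and (b) for every ε > 0 there exists δ > 0 such that whenever μ < λ < μ + δ and x is a vector with all components positive satisfying A x + F(x) = λ x, every component x_i < ε. -/

import Mathlib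

/-!
At a smallest component `x k` of a positive solution of `A x + F(x) = λ x`, the nonpositive
off-diagonal entries give `(A x)_k ≤ (∑ j, A k j) x_k`, while monotonicity of `f_k(t)/t` bounds
`f_k(x_k)/x_k` by `f_k(M)/M` as long as `x_k ≤ M`; so `λ` is at most
`max_k (∑ j, A k j + f_k(M)/M)`, and larger `λ` forces every component above `M`.

Pairing the equation with `x` and using `⟨x, A x⟩ ≥ μ |x|²` gives
`∑ x_j f_j(x_j) ≤ (λ - μ) |x|² ≤ n (λ - μ) x_k²` for a largest component `x_k`. If `x_k ≥ ε`,
the left side is at least `c x_k²` with `c = min_k f_k(ε)/ε > 0`, so `λ - μ ≥ c / n`.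
-/

open Matrix

namespace Matrix

variable {ι : Type*} [Fintype ι]

theorem mulVec_apply_le_sum_mul_of_offDiag_nonpos {R : Type*} [CommRing R] [PartialOrder R]
    [IsOrderedRing R] {A : Matrix ι ι R} (hA : ∀ i j, i ≠ j → A i j ≤ 0) {x : ι → R} {k : ι}
    (hk : ∀ j, x k ≤ x j) : (A *ᵥ x) k ≤ (∑ j, A k j) * x k := by
  rw [mulVec, dotProduct, Finset.sum_mul]
  refine Finset.sum_le_sum fun j _ => ?_
  rcases eq_or_ne k j with rfl | hkj
  · rfl
  · exact mul_le_mul_of_nonpos_left (hk j) (hA k j hkj)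

variable [DecidableEq ι] {A : Matrix ι ι ℝ} {μ : ℝ}

theorem IsHermitian.posSemidef_sub_smul_one (hA : A.IsHermitian)
    (hμ : ∀ (μ' : ℝ) (v : ι → ℝ), v ≠ 0 → A *ᵥ v = μ' • v → μ ≤ μ') :
    (A - μ • 1).PosSemidef := by
  have hB : (A - μ • 1).IsHermitian := hA.sub (isHermitian_one.smul (IsSelfAdjoint.all μ))
  refine hB.posSemidef_iff_eigenvalues_nonneg.2 fun i => ?_
  set v : ι → ℝ := ⇑(hB.eigenvectorBasis i)
  have hv : v ≠ 0 := fun h =>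
    hB.eigenvectorBasis.orthonormal.ne_zero i (by ext j; exact congrFun h j)
  have hAv : A *ᵥ v = (hB.eigenvalues i + μ) • v := by
    rw [add_smul, ← hB.mulVec_eigenvectorBasis i, sub_mulVec, smul_mulVec, one_mulVec]
    abel
  simpa using hμ _ v hv hAv

theorem IsHermitian.mul_dotProduct_self_le (hA : A.IsHermitian)
    (hμ : ∀ (μ' : ℝ) (v : ι → ℝ), v ≠ 0 → A *ᵥ v = μ' • v → μ ≤ μ') (x : ι → ℝ) :
    μ * (x ⬝ᵥ x) ≤ x ⬝ᵥ A *ᵥ x := by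
  have h := (hA.posSemidef_sub_smul_one hμ).dotProduct_mulVec_nonneg x
  rw [star_trivial, sub_mulVec, smul_mulVec, one_mulVec, dotProduct_sub, dotProduct_smul,
    smul_eq_mul] at h
  linarith

end Matrix

section PositiveSolution

variable {ι : Type*} [Fintype ι] {A : Matrix ι ι ℝ} {f : ι → ℝ → ℝ} {lam : ℝ} {x : ι → ℝ}

theorem dotProduct_mulVec_add_sum_eq (heq : A *ᵥ x + (fun i => f i (x i)) = lam • x) :
    x ⬝ᵥ A *ᵥ x + ∑ j, x j * f j (x j) = lam * (x ⬝ᵥ x) := by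
  have h := congrArg (x ⬝ᵥ ·) heq
  rw [dotProduct_add, dotProduct_smul, smul_eq_mul] at h
  exact h

theorem lt_of_forall_sum_add_div_lt (hA : ∀ i j, i ≠ j → A i j ≤ 0)
    (hf : ∀ i, MonotoneOn (fun t => f i t / t) (Set.Ioi 0)) {M : ℝ} (hM : 0 < M)
    (hlam : ∀ k, ∑ j, A k j + f k M / M < lam) (hx : ∀ i, 0 < x i)
    (heq : A *ᵥ x + (fun i => f i (x i)) = lam • x) (i : ι) : M < x i := by
  by_contra! hi
  have : Nonempty ι := ⟨i⟩
  obtain ⟨k, hk⟩ := Finite.exists_min x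
  have hAx := mulVec_apply_le_sum_mul_of_offDiag_nonpos hA hk
  have hfk : f k (x k) ≤ f k M / M * x k :=
    (div_le_iff₀ (hx k)).1 (hf k (hx k) hM ((hk i).trans hi))
  have heqk : (A *ᵥ x) k + f k (x k) = lam * x k := congrFun heq k
  have := mul_lt_mul_of_pos_right (hlam k) (hx k)
  linarith

theorem le_card_mul_sub_of_le_apply {μ ε c : ℝ} (hμ : μ * (x ⬝ᵥ x) ≤ x ⬝ᵥ A *ᵥ x)
    (hf_nonneg : ∀ i t, 0 ≤ t → 0 ≤ f i t)
    (hf : ∀ i, MonotoneOn (fun t => f i t / t) (Set.Ioi 0)) (hε : 0 < ε)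
    (hc : ∀ k, c ≤ f k ε / ε) (hx : ∀ i, 0 < x i)
    (heq : A *ᵥ x + (fun i => f i (x i)) = lam • x) {i : ι} (hi : ε ≤ x i) :
    c ≤ Fintype.card ι * (lam - μ) := by
  have : Nonempty ι := ⟨i⟩
  obtain ⟨k, hk⟩ := Finite.exists_max x
  have hxk : 0 < x k := hx k
  have hterm_nonneg : ∀ j, 0 ≤ x j * f j (x j) := fun j =>
    mul_nonneg (hx j).le (hf_nonneg j _ (hx j).le)
  have hsum : ∑ j, x j * f j (x j) ≤ (lam - μ) * (x ⬝ᵥ x) := by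
    linarith [dotProduct_mulVec_add_sum_eq heq]
  have hxx_pos : 0 < x ⬝ᵥ x := Finset.sum_pos (fun j _ => mul_pos (hx j) (hx j)) ⟨k, by simp⟩
  have hlam : 0 ≤ lam - μ :=
    nonneg_of_mul_nonneg_left ((Fintype.sum_nonneg hterm_nonneg).trans hsum) hxx_pos
  have hxx : x ⬝ᵥ x ≤ Fintype.card ι * x k ^ 2 := by
    have := Finset.sum_le_card_nsmul Finset.univ (fun j => x j * x j) (x k ^ 2)
      fun j _ => by nlinarith [hk j, hx j]
    simpa [dotProduct] using this
  have hfk : c * x k ≤ f k (x k) :=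
    (le_div_iff₀ hxk).1 ((hc k).trans (hf k hε hxk (hi.trans (hk i))))
  have hkey : c * x k ^ 2 ≤ Fintype.card ι * (lam - μ) * x k ^ 2 :=
    calc c * x k ^ 2 = x k * (c * x k) := by ring
      _ ≤ x k * f k (x k) := mul_le_mul_of_nonneg_left hfk hxk.le
      _ ≤ ∑ j, x j * f j (x j) :=
        Finset.single_le_sum (fun j _ => hterm_nonneg j) (Finset.mem_univ k)
      _ ≤ (lam - μ) * (x ⬝ᵥ x) := hsum
      _ ≤ (lam - μ) * (Fintype.card ι * x k ^ 2) := mul_le_mul_of_nonneg_left hxx hlam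
      _ = Fintype.card ι * (lam - μ) * x k ^ 2 := by ring
  exact le_of_mul_le_mul_right hkey (by positivity)

end PositiveSolution

theorem stmt_4_general (n : ℕ) (hn : 1 ≤ n) (A : Matrix (Fin n) (Fin n) ℝ)
    (hA_posdef : A.PosDef)
    (hA_offdiag : ∀ i j : Fin n, i ≠ j → A i j ≤ 0)
    (μ : ℝ)
    (hμ_min : ∀ (μ' : ℝ) (x : Fin n → ℝ), x ≠ 0 → A.mulVec x = μ' • x → μ ≤ μ')
    (f : Fin n → ℝ → ℝ)
    (hf_map : ∀ i t, 0 ≤ t → 0 ≤ f i t)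
    (hf_mono : ∀ (i : Fin n) (s t : ℝ), 0 < s → s < t → f i s / s < f i t / t) :
    (∀ M : ℝ, 0 < M → ∃ Λ : ℝ, μ < Λ ∧ ∀ (lam : ℝ) (x : Fin n → ℝ), Λ < lam →
      (∀ i, 0 < x i) → A.mulVec x + (fun i => f i (x i)) = lam • x → ∀ i, M < x i) ∧
    (∀ ε : ℝ, 0 < ε → ∃ δ : ℝ, 0 < δ ∧ ∀ (lam : ℝ) (x : Fin n → ℝ),
      μ < lam → lam < μ + δ →
      (∀ i, 0 < x i) → A.mulVec x + (fun i => f i (x i)) = lam • x → ∀ i, x i < ε) := by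
  have hf : ∀ i, StrictMonoOn (fun t => f i t / t) (Set.Ioi 0) :=
    fun i s hs t _ hst => hf_mono i s t hs hst
  refine ⟨fun M hM => ?_, fun ε hε => ?_⟩
  · obtain ⟨B, hB⟩ := Finite.exists_le fun k => ∑ j, A k j + f k M / M
    refine ⟨max B μ + 1, by linarith [le_max_right B μ], fun lam x hlam hx heq => ?_⟩
    exact lt_of_forall_sum_add_div_lt hA_offdiag (fun i => (hf i).monotoneOn) hM
      (fun k => (hB k).trans_lt (by linarith [le_max_left B μ])) hx heq
  · have hslope_pos : ∀ k, 0 < f k ε / ε := fun k =>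
      (div_nonneg (hf_map k _ (by linarith)) (by linarith)).trans_lt
        (hf k (half_pos hε) hε (half_lt_self hε))
    obtain ⟨⟨c, hc_pos⟩, hc⟩ :=
      Finite.exists_ge (α := Set.Ioi (0 : ℝ)) fun k => ⟨f k ε / ε, hslope_pos k⟩
    replace hc : ∀ k, c ≤ f k ε / ε := hc
    have hn_pos : (0 : ℝ) < n := by exact_mod_cast hn
    refine ⟨c / n, div_pos hc_pos hn_pos, fun lam x _ hlam hx heq i => ?_⟩
    by_contra! hi
    have hle := le_card_mul_sub_of_le_apply (hA_posdef.isHermitian.mul_dotProduct_self_le hμ_min x)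
      hf_map (fun i => (hf i).monotoneOn) hε hc hx heq hi
    rw [Fintype.card_fin] at hle
    have : n * (lam - μ) < c := (lt_div_iff₀' hn_pos).1 (by linarith)
    linarith

/-- (a) as λ → ∞ all components of the positive eigenvector tend to ∞;
(b) as λ → μ⁺ all components tend to 0. -/
theorem stmt_4 (n : ℕ) (hn : 1 ≤ n) (A : Matrix (Fin n) (Fin n) ℝ)
    (hA_irred : ∀ S : Set (Fin n), S.Nonempty → S ≠ Set.univ →
      ∃ i ∈ S, ∃ j, j ∉ S ∧ A i j ≠ 0)
    (hA_posdef : A.PosDef)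
    (hA_offdiag : ∀ i j : Fin n, i ≠ j → A i j ≤ 0)
    (μ : ℝ)
    (hμ_eig : ∃ x : Fin n → ℝ, x ≠ 0 ∧ A.mulVec x = μ • x)
    (hμ_min : ∀ (μ' : ℝ) (x : Fin n → ℝ), x ≠ 0 → A.mulVec x = μ' • x → μ ≤ μ')
    (f : Fin n → ℝ → ℝ)
    (hf_map : ∀ i t, 0 ≤ t → 0 ≤ f i t)
    (hf_smooth : ∀ i, ContDiffOn ℝ 1 (f i) (Set.Ici 0))
    (hf_lim0 : ∀ i, Filter.Tendsto (fun t => f i t / t) (nhdsWithin 0 (Set.Ioi 0)) (nhds 0))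
    (hf_liminf : ∀ i, Filter.Tendsto (fun t => f i t / t) Filter.atTop Filter.atTop)
    (hf_mono : ∀ (i : Fin n) (s t : ℝ), 0 < s → s < t → f i s / s < f i t / t) :
    (∀ M : ℝ, 0 < M → ∃ Λ : ℝ, μ < Λ ∧ ∀ (lam : ℝ) (x : Fin n → ℝ), Λ < lam →
      (∀ i, 0 < x i) → A.mulVec x + (fun i => f i (x i)) = lam • x → ∀ i, M < x i) ∧
    (∀ ε : ℝ, 0 < ε → ∃ δ : ℝ, 0 < δ ∧ ∀ (lam : ℝ) (x : Fin n → ℝ),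
      μ < lam → lam < μ + δ →
      (∀ i, 0 < x i) → A.mulVec x + (fun i => f i (x i)) = lam • x → ∀ i, x i < ε) :=
  stmt_4_general n hn A hA_posdef hA_offdiag μ hμ_min f hf_map hf_mono
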